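/- arXiv:1407.7914 — 4 statements merged into one kernel-verified Lean document; each statement's English description precedes it below -/
import Mathlib

section
/- Let R be ℤ[A, A^{-1}] localized at the multiplicative set generated by {A^k - 1 : k ≥ 1}. Then for distinct nonnegative integers i and k, the element φ_i^2 - φ_k^2 (where φ_k := -A^{2k+2} - A^{-2k-2}) is a unit in R if and only if it is nonzero; in particular, show φ_i + φ_k and φ_i - φ_k are each products of a unit of ℤ[A,A^{-1}] and elements of the form A^m ± 1 with m ≥ 1, hence units in the further localization inverting also all A^m + 1. -/
/-! Write `φ_k = -(A^c + A^{-c})` with `c = 2k + 2`. Then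
`(A^a + A^{-a}) ± (A^b + A^{-b}) = A^{-a} (A^{a-b} ± 1) (A^{a+b} ± 1)`, and multiplying the two
gives `A^{-2a} (A^{2(a-b)} - 1) (A^{2(a+b)} - 1)` for the difference of squares. For `i ≠ k` all
these exponents are nonzero, and `A^{-m} ± 1 = ±A^{-m} (A^m ± 1)`, so each expression is a unit
times a product of generators of the relevant multiplicative set; these generators are nonzero
in the domain `ℤ[A, A⁻¹]`, which gives the nonvanishing. -/

open LaurentPolynomial

/-- φ_k = -A^{2k+2} - A^{-2k-2} in ℤ[A, A^{-1}]. -/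
noncomputable def phi (k : ℕ) : LaurentPolynomial ℤ := -T (2 * (k : ℤ) + 2) - T (-(2 * (k : ℤ) + 2))

/-- The multiplicative set of ℤ[A,A⁻¹] generated by {A^k - 1 : k ≥ 1}. -/
noncomputable def S₁ : Submonoid (LaurentPolynomial ℤ) :=
  Submonoid.closure {x | ∃ m : ℕ, 1 ≤ m ∧ x = T (m : ℤ) - 1}

/-- The multiplicative set generated by {A^m - 1 : m ≥ 1} ∪ {A^m + 1 : m ≥ 1}. -/
noncomputable def S₂ : Submonoid (LaurentPolynomial ℤ) :=
  Submonoid.closure {x | ∃ m : ℕ, 1 ≤ m ∧ (x = T (m : ℤ) - 1 ∨ x = T (m : ℤ) + 1)}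

/-- R = ℤ[A,A⁻¹] localized at the multiplicative set generated by {A^k - 1 : k ≥ 1}. -/
noncomputable abbrev Rloc : Type := Localization S₁

/-- The further localization inverting also all A^m + 1. -/
noncomputable abbrev Rloc' : Type := Localization S₂

noncomputable def twoCosh {R : Type*} [Semiring R] (a : ℤ) : R[T;T⁻¹] := T a + T (-a)

theorem phi_eq_neg_twoCosh (k : ℕ) : phi k = -twoCosh (2 * (k : ℤ) + 2) :=
  (neg_add' _ _).symm

section Factorization

variable {R : Type*} [CommRing R] (a b : ℤ)

theorem twoCosh_add_twoCosh :
    twoCosh a + twoCosh b = (T (-a) * ((T (a - b) + 1) * (T (a + b) + 1)) : R[T;T⁻¹]) := by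
  simp only [twoCosh, mul_add, add_mul, mul_one, one_mul, ← T_add]
  ring_nf

theorem twoCosh_sub_twoCosh :
    twoCosh a - twoCosh b = (T (-a) * ((T (a - b) - 1) * (T (a + b) - 1)) : R[T;T⁻¹]) := by
  simp only [twoCosh, mul_sub, sub_mul, mul_one, one_mul, ← T_add]
  ring_nf

theorem twoCosh_sq_sub_twoCosh_sq :
    twoCosh a ^ 2 - twoCosh b ^ 2 =
      (T (-(2 * a)) * ((T (2 * (a - b)) - 1) * (T (2 * (a + b)) - 1)) : R[T;T⁻¹]) := by
  have T_two_mul (m : ℤ) : (T (2 * m) : R[T;T⁻¹]) = T m ^ 2 := by rw [T_pow]; norm_num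
  rw [sq_sub_sq, twoCosh_add_twoCosh, twoCosh_sub_twoCosh, ← mul_neg, T_two_mul, T_two_mul,
    T_two_mul]
  ring

theorem T_neg_sub_one : (T (-a) - 1 : R[T;T⁻¹]) = -T (-a) * (T a - 1) := by
  rw [neg_mul, mul_sub, ← T_add, neg_add_cancel, T_zero, mul_one, neg_sub]

theorem T_neg_add_one : (T (-a) + 1 : R[T;T⁻¹]) = T (-a) * (T a + 1) := by
  rw [mul_add, ← T_add, neg_add_cancel, T_zero, mul_one, add_comm]

end Factorization

theorem T_sub_one_ne_zero {R : Type*} [Ring R] [Nontrivial R] {m : ℤ} (hm : m ≠ 0) :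
    (T m : R[T;T⁻¹]) - 1 ≠ 0 := by
  rw [sub_ne_zero, T, ← single_zero_one_eq_one]
  intro h
  rcases AddMonoidAlgebra.single_inj.mp h with ⟨h, _⟩ | ⟨h, _⟩
  · exact hm h
  · exact one_ne_zero h

theorem Submonoid.exists_isUnit_mul_of_mem_units_sup {M : Type*} [CommMonoid M]
    {S : Submonoid M} {x : M} (hx : x ∈ IsUnit.submonoid M ⊔ S) :
    ∃ u s : M, IsUnit u ∧ s ∈ S ∧ x = u * s := by
  obtain ⟨u, hu, s, hs, rfl⟩ := Submonoid.mem_sup.mp hx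
  exact ⟨u, s, hu, hs, rfl⟩

theorem Submonoid.neg_mem_units_sup {R : Type*} [CommRing R] {S : Submonoid R} {x : R}
    (hx : x ∈ IsUnit.submonoid R ⊔ S) : -x ∈ IsUnit.submonoid R ⊔ S := by
  rw [neg_eq_neg_one_mul]
  exact mul_mem (Submonoid.mem_sup_left isUnit_one.neg) hx

theorem isUnit_algebraMap_of_mem_units_sup {R : Type*} [CommSemiring R] {S : Submonoid R}
    {x : R} (hx : x ∈ IsUnit.submonoid R ⊔ S) : IsUnit (algebraMap R (Localization S) x) := by
  obtain ⟨u, s, hu, hs, rfl⟩ := Submonoid.exists_isUnit_mul_of_mem_units_sup hx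
  rw [map_mul]
  exact (hu.map _).mul (IsLocalization.map_units (Localization S) ⟨s, hs⟩)

theorem S₁_le_S₂ : S₁ ≤ S₂ :=
  Submonoid.closure_mono fun _ ⟨m, hm, hx⟩ => ⟨m, hm, Or.inl hx⟩

theorem units_sup_S₁_le_nonZeroDivisors :
    IsUnit.submonoid (LaurentPolynomial ℤ) ⊔ S₁ ≤ nonZeroDivisors (LaurentPolynomial ℤ) :=
  sup_le (isUnit_le_nonZeroDivisors _) <| Submonoid.closure_le.mpr fun _ ⟨m, hm, hx⟩ =>
    hx ▸ mem_nonZeroDivisors_of_ne_zero (T_sub_one_ne_zero (by omega))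

theorem T_sub_one_mem_units_sup_S₁ {m : ℤ} (hm : m ≠ 0) :
    T m - 1 ∈ IsUnit.submonoid (LaurentPolynomial ℤ) ⊔ S₁ := by
  obtain ⟨n, rfl | rfl⟩ := Int.eq_nat_or_neg m
  · exact Submonoid.mem_sup_right (Submonoid.subset_closure ⟨n, by omega, rfl⟩)
  · rw [T_neg_sub_one]
    exact mul_mem (Submonoid.mem_sup_left (isUnit_T _).neg)
      (Submonoid.mem_sup_right (Submonoid.subset_closure ⟨n, by omega, rfl⟩))

theorem T_add_one_mem_units_sup_S₂ {m : ℤ} (hm : m ≠ 0) :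
    T m + 1 ∈ IsUnit.submonoid (LaurentPolynomial ℤ) ⊔ S₂ := by
  obtain ⟨n, rfl | rfl⟩ := Int.eq_nat_or_neg m
  · exact Submonoid.mem_sup_right (Submonoid.subset_closure ⟨n, by omega, Or.inr rfl⟩)
  · rw [T_neg_add_one]
    exact mul_mem (Submonoid.mem_sup_left (isUnit_T _))
      (Submonoid.mem_sup_right (Submonoid.subset_closure ⟨n, by omega, Or.inr rfl⟩))

/-- For distinct nonnegative integers i, k: φ_i² - φ_k² is a unit in R iff it is nonzero;
moreover φ_i + φ_k and φ_i - φ_k are each a unit of ℤ[A,A⁻¹] times a product of elements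
of the form A^m ± 1 (m ≥ 1), hence units in the further localization inverting all A^m + 1. -/
theorem phi_sq_diff_unit (i k : ℕ) (h : i ≠ k) :
    (IsUnit (algebraMap (LaurentPolynomial ℤ) Rloc (phi i ^ 2 - phi k ^ 2)) ↔
      phi i ^ 2 - phi k ^ 2 ≠ 0) ∧
    (∃ u s : LaurentPolynomial ℤ, IsUnit u ∧ s ∈ S₂ ∧ phi i + phi k = u * s) ∧
    (∃ u s : LaurentPolynomial ℤ, IsUnit u ∧ s ∈ S₂ ∧ phi i - phi k = u * s) ∧
    IsUnit (algebraMap (LaurentPolynomial ℤ) Rloc' (phi i + phi k)) ∧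
    IsUnit (algebraMap (LaurentPolynomial ℤ) Rloc' (phi i - phi k)) := by
  set a : ℤ := 2 * i + 2
  set b : ℤ := 2 * k + 2
  have hd : a - b ≠ 0 := by omega
  have hs : a + b ≠ 0 := by omega
  have hT (c : ℤ) : T c ∈ IsUnit.submonoid (LaurentPolynomial ℤ) ⊔ S₁ :=
    Submonoid.mem_sup_left (isUnit_T c)
  have hsq : phi i ^ 2 - phi k ^ 2 ∈ IsUnit.submonoid _ ⊔ S₁ := by
    rw [phi_eq_neg_twoCosh, phi_eq_neg_twoCosh, neg_sq, neg_sq, twoCosh_sq_sub_twoCosh_sq]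
    exact mul_mem (hT _) (mul_mem (T_sub_one_mem_units_sup_S₁ (by omega))
      (T_sub_one_mem_units_sup_S₁ (by omega)))
  have hadd : phi i + phi k ∈ IsUnit.submonoid _ ⊔ S₂ := by
    rw [phi_eq_neg_twoCosh, phi_eq_neg_twoCosh, ← neg_add, twoCosh_add_twoCosh]
    exact Submonoid.neg_mem_units_sup <| mul_mem (sup_le_sup_left S₁_le_S₂ _ (hT _))
      (mul_mem (T_add_one_mem_units_sup_S₂ hd) (T_add_one_mem_units_sup_S₂ hs))
  have hsub : phi i - phi k ∈ IsUnit.submonoid _ ⊔ S₂ := by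
    rw [phi_eq_neg_twoCosh, phi_eq_neg_twoCosh, neg_sub_neg, twoCosh_sub_twoCosh]
    refine sup_le_sup_left S₁_le_S₂ _ (mul_mem (hT _) (mul_mem ?_ ?_)) <;>
      exact T_sub_one_mem_units_sup_S₁ (by omega)
  exact ⟨iff_of_true (isUnit_algebraMap_of_mem_units_sup hsq)
      (nonZeroDivisors.ne_zero (units_sup_S₁_le_nonZeroDivisors hsq)),
    Submonoid.exists_isUnit_mul_of_mem_units_sup hadd,
    Submonoid.exists_isUnit_mul_of_mem_units_sup hsub,
    isUnit_algebraMap_of_mem_units_sup hadd, isUnit_algebraMap_of_mem_units_sup hsub⟩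
end

section
/- In ℤ[A, A^{-1}], the ideal generated by 9 and 4 + A^4 is a proper ideal (not equal to the whole ring). -/
/-!
Send `A` to `1 + i` in `(ℤ/9)[i]`. Since `(1 + i)⁴ = (2i)² = -4` and `1 + i` is a unit (its norm
`2` is invertible mod `9`), this gives a ring map from `ℤ[A, A⁻¹]` to a nonzero ring that kills
both `9` and `4 + A⁴`, so the ideal they generate lies in a proper kernel.
-/

open LaurentPolynomial

theorem Ideal.span_ne_top_of_map_eq_zero {R S : Type*} [Semiring R] [Semiring S] [Nontrivial S]
    (f : R →+* S) {s : Set R} (hs : ∀ x ∈ s, f x = 0) : Ideal.span s ≠ ⊤ :=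
  ne_top_of_le_ne_top (RingHom.ker_ne_top f) (Ideal.span_le.mpr hs)

/-- `1 + i` in `(ℤ/9)[i]`, with inverse `5 + 4i = (1 - i) / 2`. -/
def onePlusI : (QuadraticAlgebra (ZMod 9) (-1) 0)ˣ :=
  ⟨⟨1, 1⟩, ⟨5, 4⟩, by decide, by decide⟩

theorem onePlusI_pow_four : (onePlusI : QuadraticAlgebra (ZMod 9) (-1) 0) ^ 4 = -4 := by
  decide

/-- In ℤ[A, A^{-1}], the ideal generated by 9 and 4 + A^4 is proper. -/
theorem ideal_nine_proper :
    Ideal.span ({9, 4 + T 4} : Set (LaurentPolynomial ℤ)) ≠ ⊤ := by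
  have : Fact (1 < 9) := ⟨by norm_num⟩
  refine Ideal.span_ne_top_of_map_eq_zero (eval₂ (Int.castRingHom _) onePlusI) ?_
  rintro x (rfl | rfl)
  · rw [map_ofNat]
    decide
  · rw [map_add, map_ofNat, eval₂_T, zpow_ofNat, Units.val_pow_eq_pow_val, onePlusI_pow_four]
    exact add_neg_cancel 4
end

section
/- In ℤ[A, A^{-1}], the ideal generated by -9 and -2 + A^4 is a proper ideal. -/
/-!
Send `A` to the root `α` of `X ^ 4 + 1` in `𝔽₃[X]/(X ^ 4 + 1)`. Since `α ^ 8 = 1`, `α` is a unit, so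
this is a ring homomorphism out of `ℤ[A, A⁻¹]`. It kills `9` because `3 = 0` there, and it kills
`A ^ 4 - 2` because `α ^ 4 - 2 = -3 = 0`. Its kernel is therefore a proper ideal containing both
generators.
-/

open LaurentPolynomial

theorem IsUnit.of_pow_eq_neg_one {M : Type*} [Monoid M] [HasDistribNeg M] {x : M} {n : ℕ}
    (hn : n ≠ 0) (h : x ^ n = -1) : IsUnit x :=
  IsUnit.of_pow_eq_one (n := 2 * n) (by rw [pow_mul', h, neg_one_sq]) (by omega)

open Polynomial in
theorem AdjoinRoot.root_X_pow_add_one_pow {R : Type*} [CommRing R] (n : ℕ) :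
    root (X ^ n + 1 : R[X]) ^ n = -1 := by
  have h := mk_self (f := (X ^ n + 1 : R[X]))
  rw [map_add, map_pow, mk_X, map_one] at h
  exact eq_neg_of_add_eq_zero_left h

open Polynomial in
/-- In ℤ[A, A^{-1}], the ideal generated by -9 and -2 + A^4 is proper. -/
theorem ideal_neg_nine_proper :
    Ideal.span ({-9, -2 + T 4} : Set (LaurentPolynomial ℤ)) ≠ ⊤ := by
  let S := AdjoinRoot (X ^ 4 + 1 : (ZMod 3)[X])
  have hdeg : (X ^ 4 + 1 : (ZMod 3)[X]).degree = 4 := by compute_degree!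
  have : Nontrivial S := AdjoinRoot.nontrivial _ (by rw [hdeg]; decide)
  have three_eq_zero : (3 : S) = 0 := by
    rw [← map_ofNat (algebraMap (ZMod 3) S) 3, show (3 : ZMod 3) = 0 from rfl, map_zero]
  have hroot := AdjoinRoot.root_X_pow_add_one_pow (R := ZMod 3) 4
  have hunit := IsUnit.of_pow_eq_neg_one (by norm_num) hroot
  refine Ideal.span_ne_top_of_map_eq_zero (eval₂ (Int.castRingHom S) hunit.unit) ?_
  rintro _ (rfl | rfl)
  · rw [map_neg, map_ofNat]
    linear_combination -3 * three_eq_zero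
  · rw [map_add, map_neg, map_ofNat, eval₂_T, zpow_ofNat, Units.val_pow_eq_pow_val,
      IsUnit.unit_spec, hroot]
    linear_combination -three_eq_zero
end

section
/- In ℤ[A, A^{-1}], consider the ideal I = ⟨9, 4 + A^4⟩. Every integer belonging to I is divisible by 3. (Hence any Laurent polynomial in I evaluated at A = 1 is divisible by 3.) -/
open LaurentPolynomial Polynomial

/-! Send `A` to a primitive eighth root of unity `ω` in characteristic `3`, i.e. to the image of
a root of `X⁴ + 1` in `𝔽₃[X]/(X⁴ + 1)`. Then `9 ↦ 0` and `4 + A⁴ ↦ 4 - 1 = 3 ↦ 0`, so the whole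
ideal dies, and an integer dies in a ring of characteristic `3` only if `3` divides it. -/

theorem dvd_of_intCast_mem_span {R S : Type*} [CommRing R] [Ring S] (p : ℕ) [CharP S p]
    (f : R →+* S) {s : Set R} (hs : ∀ x ∈ s, f x = 0) {n : ℤ}
    (hn : (n : R) ∈ Ideal.span s) : (p : ℤ) ∣ n := by
  have hker : Ideal.span s ≤ RingHom.ker f := Ideal.span_le.mpr hs
  rw [← CharP.intCast_eq_zero_iff S p, ← map_intCast f]
  exact hker hn

namespace ZetaEightModThree

abbrev S : Type := AdjoinRoot (X ^ 4 + 1 : (ZMod 3)[X])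

instance : Nontrivial S :=
  AdjoinRoot.nontrivial _ <| by
    rw [show (X ^ 4 + 1 : (ZMod 3)[X]).degree = 4 by compute_degree!]
    decide

instance : CharP S 3 :=
  charP_of_injective_algebraMap' (ZMod 3) 3

theorem root_pow_four : (AdjoinRoot.root _ : S) ^ 4 = -1 := by
  rw [eq_neg_iff_add_eq_zero]
  have h := AdjoinRoot.mk_self (f := (X ^ 4 + 1 : (ZMod 3)[X]))
  rwa [map_add, map_pow, AdjoinRoot.mk_X, map_one] at h

noncomputable def ω : Sˣ :=
  Units.ofPowEqOne (AdjoinRoot.root _) 8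
    (by rw [show 8 = 4 * 2 by rfl, pow_mul, root_pow_four]; norm_num) (by norm_num)

theorem ω_pow_four : ((ω ^ (4 : ℤ) : Sˣ) : S) = -1 := by
  rw [zpow_ofNat, Units.val_pow_eq_pow_val]
  exact root_pow_four

end ZetaEightModThree

open ZetaEightModThree in
/-- Every integer belonging to the ideal ⟨9, 4 + A⁴⟩ of ℤ[A, A⁻¹] is divisible by 3. -/
theorem int_in_ideal_div_three (n : ℤ)
    (h : (n : LaurentPolynomial ℤ) ∈ Ideal.span ({9, 4 + T 4} : Set (LaurentPolynomial ℤ))) :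
    (3 : ℤ) ∣ n := by
  have hthree : (3 : S) = 0 := by exact_mod_cast CharP.cast_eq_zero S 3
  refine dvd_of_intCast_mem_span 3 (eval₂ (Int.castRingHom S) ω) ?_ h
  rintro x (rfl | rfl)
  · rw [map_ofNat, show (9 : S) = 3 * 3 by norm_num, hthree, zero_mul]
  · rw [map_add, map_ofNat, eval₂_T, ω_pow_four, show (4 : S) + -1 = 3 by norm_num, hthree]
end
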